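/- Let H be a Hopf G-coalgebra with bijective antipode and A a right H-comodule Poisson algebra. Then the Poisson center A^A = {A_α^{A_α}}, where A_α^{A_α} = {a ∈ A_α : {a,b} = 0 for all b ∈ A_α}, is an H-subcomodule Poisson subalgebra of A. -/

import Mathlib

open TensorProduct

noncomputable section

/-- Transport along an equality of indices for a family of modules. -/
def famCast {k : Type*} [CommSemiring k] {G : Type*} {H : G → Type*}
    [∀ α, AddCommMonoid (H α)] [∀ α, Module k (H α)] {x y : G} (h : x = y) :
    H x →ₗ[k] H y := by subst h; exact LinearMap.id

/-- A Hopf `G`-coalgebra over `k`. -/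
structure HopfGCoalgebra (k G : Type*) [Field k] [CommGroup G] where
  H : G → Type*
  [ring : ∀ α, Ring (H α)]
  [alg : ∀ α, Algebra k (H α)]
  Δ : ∀ α β : G, H (α * β) →ₐ[k] H α ⊗[k] H β
  ε : H 1 →ₐ[k] k
  coassoc : ∀ α β γ : G,
    (TensorProduct.assoc k (H α) (H β) (H γ)).toLinearMap ∘ₗ
      TensorProduct.map (Δ α β).toLinearMap LinearMap.id ∘ₗ (Δ (α * β) γ).toLinearMap
    = TensorProduct.map LinearMap.id (Δ β γ).toLinearMap ∘ₗ (Δ α (β * γ)).toLinearMap ∘ₗ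
        famCast (k := k) (mul_assoc α β γ)
  counit_left : ∀ α : G,
    (TensorProduct.lid k (H α)).toLinearMap ∘ₗ
      TensorProduct.map ε.toLinearMap LinearMap.id ∘ₗ (Δ 1 α).toLinearMap
    = famCast (k := k) (one_mul α)
  counit_right : ∀ α : G,
    (TensorProduct.rid k (H α)).toLinearMap ∘ₗ
      TensorProduct.map LinearMap.id ε.toLinearMap ∘ₗ (Δ α 1).toLinearMap
    = famCast (k := k) (mul_one α)
  S : ∀ α : G, H α →ₗ[k] H α⁻¹
  antipode_left : ∀ α : G,
    LinearMap.mul' k (H α) ∘ₗ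
      TensorProduct.map (famCast (k := k) (inv_inv α) ∘ₗ S α⁻¹) LinearMap.id ∘ₗ
      (Δ α⁻¹ α).toLinearMap ∘ₗ famCast (k := k) (inv_mul_cancel α).symm
    = Algebra.linearMap k (H α) ∘ₗ ε.toLinearMap
  antipode_right : ∀ α : G,
    LinearMap.mul' k (H α⁻¹) ∘ₗ
      TensorProduct.map LinearMap.id (S α) ∘ₗ
      (Δ α⁻¹ α).toLinearMap ∘ₗ famCast (k := k) (inv_mul_cancel α).symm
    = Algebra.linearMap k (H α⁻¹) ∘ₗ ε.toLinearMap

attribute [instance] HopfGCoalgebra.ring HopfGCoalgebra.alg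
variable {k G : Type*} [Field k] [CommGroup G]

/-- A family of Poisson algebras which is a right `H`-comodule Poisson algebra. -/
structure GComodulePoissonAlgebra (Hc : HopfGCoalgebra k G) where
  A : G → Type*
  [cring : ∀ α, CommRing (A α)]
  [alg : ∀ α, Algebra k (A α)]
  pb : ∀ α : G, A α →ₗ[k] A α →ₗ[k] A α
  pb_skew : ∀ (α : G) (a b : A α), pb α a b = - pb α b a
  pb_jacobi : ∀ (α : G) (a b c : A α),
    pb α a (pb α b c) = pb α (pb α a b) c + pb α b (pb α a c)
  pb_leibniz : ∀ (α : G) (a b c : A α), pb α a (b * c) = pb α a b * c + b * pb α a c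
  ρ : ∀ α β : G, A (α * β) →ₐ[k] A α ⊗[k] Hc.H β
  coassoc : ∀ α β γ : G,
    (TensorProduct.assoc k (A α) (Hc.H β) (Hc.H γ)).toLinearMap ∘ₗ
      TensorProduct.map (ρ α β).toLinearMap LinearMap.id ∘ₗ (ρ (α * β) γ).toLinearMap
    = TensorProduct.map LinearMap.id (Hc.Δ β γ).toLinearMap ∘ₗ (ρ α (β * γ)).toLinearMap ∘ₗ
        famCast (k := k) (mul_assoc α β γ)
  counit : ∀ α : G,
    (TensorProduct.rid k (A α)).toLinearMap ∘ₗ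
      TensorProduct.map LinearMap.id Hc.ε.toLinearMap ∘ₗ (ρ α 1).toLinearMap
    = famCast (k := k) (mul_one α)
  pb_comp : ∀ α β : G,
    (ρ α β).toLinearMap ∘ₗ TensorProduct.lift (pb (α * β))
    = TensorProduct.map (TensorProduct.lift (pb α)) (LinearMap.mul' k (Hc.H β)) ∘ₗ
        (TensorProduct.tensorTensorTensorComm k (A α) (Hc.H β) (A α) (Hc.H β)).toLinearMap ∘ₗ
        TensorProduct.map (ρ α β).toLinearMap (ρ α β).toLinearMap

attribute [instance] GComodulePoissonAlgebra.cring GComodulePoissonAlgebra.alg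

/-- A Poisson `(A,H)`-Hopf module. -/
structure PoissonHopfModule {Hc : HopfGCoalgebra k G}
    (Ac : GComodulePoissonAlgebra Hc) where
  M : G → Type*
  [acg : ∀ α, AddCommGroup (M α)]
  [mod : ∀ α, Module k (M α)]
  smul : ∀ α : G, Ac.A α →ₗ[k] M α →ₗ[k] M α
  one_smul : ∀ (α : G) (m : M α), smul α 1 m = m
  mul_smul : ∀ (α : G) (a b : Ac.A α) (m : M α), smul α (a * b) m = smul α a (smul α b m)
  dia : ∀ α : G, Ac.A α →ₗ[k] M α →ₗ[k] M α
  dia_lie : ∀ (α : G) (a b : Ac.A α) (m : M α),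
    dia α (Ac.pb α a b) m = dia α a (dia α b m) - dia α b (dia α a m)
  poisson1 : ∀ (α : G) (a b : Ac.A α) (m : M α),
    dia α a (smul α b m) = smul α (Ac.pb α a b) m + smul α b (dia α a m)
  poisson2 : ∀ (α : G) (a b : Ac.A α) (m : M α),
    dia α (a * b) m = smul α a (dia α b m) + smul α b (dia α a m)
  ρ : ∀ α β : G, M (α * β) →ₗ[k] M α ⊗[k] Hc.H β
  coassoc : ∀ α β γ : G,
    (TensorProduct.assoc k (M α) (Hc.H β) (Hc.H γ)).toLinearMap ∘ₗ
      TensorProduct.map (ρ α β) LinearMap.id ∘ₗ ρ (α * β) γ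
    = TensorProduct.map LinearMap.id (Hc.Δ β γ).toLinearMap ∘ₗ ρ α (β * γ) ∘ₗ
        famCast (k := k) (mul_assoc α β γ)
  counit : ∀ α : G,
    (TensorProduct.rid k (M α)).toLinearMap ∘ₗ
      TensorProduct.map LinearMap.id Hc.ε.toLinearMap ∘ₗ ρ α 1
    = famCast (k := k) (mul_one α)
  smul_comp : ∀ α β : G,
    ρ α β ∘ₗ TensorProduct.lift (smul (α * β))
    = TensorProduct.map (TensorProduct.lift (smul α)) (LinearMap.mul' k (Hc.H β)) ∘ₗ
        (TensorProduct.tensorTensorTensorComm k (Ac.A α) (Hc.H β) (M α) (Hc.H β)).toLinearMap ∘ₗ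
        TensorProduct.map (Ac.ρ α β).toLinearMap (ρ α β)
  dia_comp : ∀ α β : G,
    ρ α β ∘ₗ TensorProduct.lift (dia (α * β))
    = TensorProduct.map (TensorProduct.lift (dia α)) (LinearMap.mul' k (Hc.H β)) ∘ₗ
        (TensorProduct.tensorTensorTensorComm k (Ac.A α) (Hc.H β) (M α) (Hc.H β)).toLinearMap ∘ₗ
        TensorProduct.map (Ac.ρ α β).toLinearMap (ρ α β)

attribute [instance] PoissonHopfModule.acg PoissonHopfModule.mod

variable {Hc : HopfGCoalgebra k G} {Ac : GComodulePoissonAlgebra Hc}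

/-- A coinvariant family for a Poisson Hopf module. -/
def PoissonHopfModule.IsCoinv (Mc : PoissonHopfModule Ac) (m : ∀ γ : G, Mc.M γ) : Prop :=
  ∀ γ β : G, Mc.ρ γ β (m (γ * β)) = m γ ⊗ₜ[k] (1 : Hc.H β)

/-- A coinvariant family for the comodule algebra `A`. -/
def GComodulePoissonAlgebra.IsCoinv (Ac : GComodulePoissonAlgebra Hc)
    (a : ∀ γ : G, Ac.A γ) : Prop :=
  ∀ γ β : G, Ac.ρ γ β (a (γ * β)) = a γ ⊗ₜ[k] (1 : Hc.H β)

/-- `M^{A_α}_α`, the space of elements killed by the Lie action. -/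
def PoissonHopfModule.diaInv (Mc : PoissonHopfModule Ac) (α : G) :
    Submodule k (Mc.M α) where
  carrier := {m | ∀ a : Ac.A α, Mc.dia α a m = 0}
  zero_mem' := fun a => map_zero _
  add_mem' := fun {x y} hx hy a => by rw [map_add, hx a, hy a, add_zero]
  smul_mem' := fun c x hx a => by rw [map_smul, hx a, smul_zero]

/-- The Poisson-central part `A^{A_α}_α` of `A_α`. -/
def GComodulePoissonAlgebra.center (Ac : GComodulePoissonAlgebra Hc) (α : G) :
    Submodule k (Ac.A α) where
  carrier := {a | ∀ b : Ac.A α, Ac.pb α a b = 0}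
  zero_mem' := fun b => by rw [map_zero]; rfl
  add_mem' := fun {x y} hx hy b => by rw [map_add]; simp [hx b, hy b]
  smul_mem' := fun c x hx b => by rw [map_smul]; simp [hx b]

/-- `M^{coH}_α` for a Poisson Hopf module. -/
def PoissonHopfModule.coinv (Mc : PoissonHopfModule Ac) (α : G) : Set (Mc.M α) :=
  {x | ∃ m : ∀ γ : G, Mc.M γ, Mc.IsCoinv m ∧ m α = x}

/-- `A^{coH}_α`. -/
def GComodulePoissonAlgebra.coinv (Ac : GComodulePoissonAlgebra Hc) (α : G) :
    Set (Ac.A α) :=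
  {x | ∃ a : ∀ γ : G, Ac.A γ, Ac.IsCoinv a ∧ a α = x}

/-! ### Auxiliary lemmas for the proof -/

section Aux

lemma famCast_famCast {H : G → Type*} [∀ γ, AddCommMonoid (H γ)] [∀ γ, Module k (H γ)]
    {x y z : G} (h1 : x = y) (h2 : y = z) (h3 : x = z) (a : H x) :
    famCast (k := k) h2 (famCast (k := k) h1 a) = famCast (k := k) h3 a := by
  subst h1; subst h2; rfl

lemma famCast_id {H : G → Type*} [∀ γ, AddCommMonoid (H γ)] [∀ γ, Module k (H γ)]
    {x : G} (h : x = x) (a : H x) : famCast (k := k) h a = a := rfl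

lemma famCast_mul' {x y : G} (h : x = y) (a b : Hc.H x) :
    famCast (k := k) h (a * b) = famCast (k := k) h a * famCast (k := k) h b := by
  subst h; rfl

lemma famCast_smul_one {x y : G} (h : x = y) (c : k) :
    famCast (k := k) h (c • (1 : Hc.H x)) = c • (1 : Hc.H y) := by
  subst h; rfl

lemma rho_cast (α : G) {γ γ' : G} (h : γ = γ') (hh : α * γ = α * γ') (a : Ac.A (α * γ)) :
    Ac.ρ α γ' (famCast (k := k) hh a)
      = TensorProduct.map LinearMap.id (famCast (k := k) h) (Ac.ρ α γ a) := by
  subst h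
  rw [show (famCast (k := k) hh : Ac.A (α * γ) →ₗ[k] Ac.A (α * γ)) = LinearMap.id from rfl,
    show (famCast (k := k) (rfl : γ = γ) : Hc.H γ →ₗ[k] Hc.H γ) = LinearMap.id from rfl,
    TensorProduct.map_id]
  rfl

lemma delta_cast {γ γ' δ : G} (h : γ = γ') (hh : γ * δ = γ' * δ) (z : Hc.H (γ * δ)) :
    Hc.Δ γ' δ (famCast (k := k) hh z)
      = TensorProduct.map (famCast (k := k) h) LinearMap.id (Hc.Δ γ δ z) := by
  subst h
  rw [show (famCast (k := k) hh : Hc.H (γ * δ) →ₗ[k] Hc.H (γ * δ)) = LinearMap.id from rfl,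
    show (famCast (k := k) (rfl : γ = γ) : Hc.H γ →ₗ[k] Hc.H γ) = LinearMap.id from rfl,
    TensorProduct.map_id]
  rfl

lemma antipode' (β : G) (z : Hc.H (β * β⁻¹)) :
    LinearMap.mul' k (Hc.H β)
      (TensorProduct.map LinearMap.id (famCast (k := k) (inv_inv β) ∘ₗ Hc.S β⁻¹)
        ((Hc.Δ β β⁻¹) z))
      = Hc.ε (famCast (k := k) (mul_inv_cancel β) z) • (1 : Hc.H β) := by
  have h : β⁻¹⁻¹ = β := inv_inv β
  have hh : β⁻¹⁻¹ * β⁻¹ = β * β⁻¹ := by rw [h]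
  have hz : famCast (k := k) hh (famCast (k := k) hh.symm z) = z :=
    famCast_famCast (k := k) hh.symm hh rfl z
  set w : Hc.H (β⁻¹⁻¹ * β⁻¹) := famCast (k := k) hh.symm z with hw
  -- rewrite z in terms of w
  rw [← hz, delta_cast (Hc := Hc) h hh w]
  -- antipode axiom at β⁻¹
  have p : (1 : G) = β⁻¹⁻¹ * β⁻¹ := (inv_mul_cancel β⁻¹).symm
  have hwp : famCast (k := k) p (famCast (k := k) p.symm w) = w :=
    famCast_famCast (k := k) p.symm p rfl w
  have hanti := LinearMap.congr_fun (Hc.antipode_right β⁻¹) (famCast (k := k) p.symm w)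
  simp only [LinearMap.coe_comp, Function.comp_apply, AlgHom.toLinearMap_apply,
    Algebra.linearMap_apply] at hanti
  rw [show famCast (k := k) ((inv_mul_cancel β⁻¹).symm) (famCast (k := k) p.symm w) = w from
    famCast_famCast (k := k) p.symm _ rfl w] at hanti
  -- hanti : mul' (map id (S β⁻¹) (Δ w)) = algebraMap k _ (ε (famCast p.symm w))
  -- push the cast through
  have key : ∀ t : Hc.H β⁻¹⁻¹ ⊗[k] Hc.H β⁻¹,
      LinearMap.mul' k (Hc.H β)
        (TensorProduct.map LinearMap.id (famCast (k := k) (inv_inv β) ∘ₗ Hc.S β⁻¹)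
          (TensorProduct.map (famCast (k := k) h) LinearMap.id t))
      = famCast (k := k) h
          (LinearMap.mul' k (Hc.H β⁻¹⁻¹) (TensorProduct.map LinearMap.id (Hc.S β⁻¹) t)) := by
    intro t
    induction t using TensorProduct.induction_on with
    | zero => simp
    | add t1 t2 h1 h2 => simp only [map_add, h1, h2]
    | tmul u v =>
      simp only [TensorProduct.map_tmul, LinearMap.id_coe, id_eq, LinearMap.coe_comp,
        Function.comp_apply, LinearMap.mul'_apply]
      exact (famCast_mul' (Hc := Hc) (k := k) h u (Hc.S β⁻¹ v)).symm
  rw [key, hanti, Algebra.algebraMap_eq_smul_one, famCast_smul_one (Hc := Hc) (k := k) h]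
  congr 1
  have : famCast (k := k) (mul_inv_cancel β) (famCast (k := k) hh w)
      = famCast (k := k) (p.symm) w := famCast_famCast (k := k) hh (mul_inv_cancel β) p.symm w
  rw [this]

lemma mem_range_map_subtype {M N : Type*} [AddCommGroup M] [Module k M]
    [AddCommGroup N] [Module k N] (p : Submodule k M) {ι : Type*} (F : ι → (M →ₗ[k] M))
    (hF : ∀ m, (∀ i, F i m = 0) → m ∈ p) (z : M ⊗[k] N)
    (hz : ∀ i, LinearMap.rTensor N (F i) z = 0) :
    z ∈ LinearMap.range (TensorProduct.map p.subtype (LinearMap.id : N →ₗ[k] N)) := by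
  classical
  let e := Module.Basis.ofVectorSpace k N
  let E : M ⊗[k] N ≃ₗ[k] (Module.Basis.ofVectorSpaceIndex k N →₀ M) :=
    (LinearEquiv.lTensor M e.repr).trans (TensorProduct.finsuppScalarRight k k M _)
  have Esymm_single : ∀ (j) (m : M), E.symm (Finsupp.single j m) = m ⊗ₜ[k] (e j : N) := by
    intro j m
    simp only [E, LinearEquiv.trans_symm, LinearEquiv.trans_apply,
      TensorProduct.finsuppScalarRight_symm_apply_single]
    simp [LinearEquiv.lTensor]
  have nat : ∀ (f : M →ₗ[k] M) (w : M ⊗[k] N),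
      E (LinearMap.rTensor N f w) = Finsupp.mapRange.linearMap f (E w) := by
    intro f w
    induction w using TensorProduct.induction_on with
    | zero => simp
    | tmul m n =>
      ext j
      simp only [E, LinearEquiv.trans_apply, LinearMap.rTensor_tmul]
      rw [show ((LinearEquiv.lTensor M e.repr) (f m ⊗ₜ[k] n)) = f m ⊗ₜ[k] e.repr n from rfl,
        show ((LinearEquiv.lTensor M e.repr) (m ⊗ₜ[k] n)) = m ⊗ₜ[k] e.repr n from rfl]
      simp only [TensorProduct.finsuppScalarRight_apply_tmul, Finsupp.sum_apply,
        Finsupp.mapRange.linearMap_apply, Finsupp.mapRange_apply,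
        Finsupp.single_apply, Finsupp.sum_ite_eq', map_smul]
      split <;> simp
    | add x y hx hy => simp [map_add, hx, hy]
  have hc : ∀ j, (E z) j ∈ p := by
    intro j
    apply hF
    intro i
    have h1 := nat (F i) z
    rw [hz i, map_zero] at h1
    have h2 := congrArg (fun f => f j) h1.symm
    simpa using h2
  have hzE : z = ((E z).support.sum fun j => ((E z) j) ⊗ₜ[k] (e j : N)) := by
    conv_lhs => rw [← E.symm_apply_apply z, ← Finsupp.sum_single (E z)]
    rw [map_finsuppSum, Finsupp.sum]
    exact Finset.sum_congr rfl fun j _ => Esymm_single j _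
  refine ⟨(E z).support.sum fun j => (⟨(E z) j, hc j⟩ : p) ⊗ₜ[k] (e j : N), ?_⟩
  rw [map_sum]
  simp only [TensorProduct.map_tmul, Submodule.coe_subtype, LinearMap.id_coe, id_eq]
  exact hzE.symm

lemma mem_center_iff {α : G} {a : Ac.A α} :
    a ∈ Ac.center α ↔ ∀ b : Ac.A α, Ac.pb α a b = 0 := Iff.rfl

end Aux
set_option maxHeartbeats 1600000 in
set_option synthInstance.maxHeartbeats 400000 in
lemma crux (α β : G) (x : Ac.A (α * β)) (hx : ∀ y, Ac.pb (α * β) x y = 0) (b : Ac.A α) :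
    LinearMap.rTensor (Hc.H β) ((Ac.pb α).flip b) ((Ac.ρ α β) x) = 0 := by
  classical
  set ρx := (Ac.ρ α β) x with hρx
  let Mw : (Ac.A α ⊗[k] Hc.H β) → (Ac.A α ⊗[k] Hc.H β) →ₗ[k] (Ac.A α ⊗[k] Hc.H β) := fun w =>
    (TensorProduct.map (TensorProduct.lift (Ac.pb α)) (LinearMap.mul' k (Hc.H β))) ∘ₗ
      (TensorProduct.tensorTensorTensorComm k (Ac.A α) (Hc.H β) (Ac.A α) (Hc.H β)).toLinearMap ∘ₗ
      (TensorProduct.mk k _ _ w)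
  have Mw_tmul : ∀ (x₀ : Ac.A α) (x₁ : Hc.H β) (a : Ac.A α) (h : Hc.H β),
      Mw (x₀ ⊗ₜ[k] x₁) (a ⊗ₜ[k] h) = (Ac.pb α x₀ a) ⊗ₜ[k] (x₁ * h) := by
    intro x₀ x₁ a h
    simp [Mw, TensorProduct.tensorTensorTensorComm_tmul, LinearMap.mul'_apply]
  have Mw_add : ∀ w w' z, Mw (w + w') z = Mw w z + Mw w' z := by
    intro w w' z
    simp [Mw, TensorProduct.add_tmul]
  have Mw_zero : ∀ z, Mw 0 z = 0 := by
    intro z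
    simp [Mw, TensorProduct.zero_tmul]
  have f1 : ∀ y : Ac.A (α * β), Mw ρx ((Ac.ρ α β) y) = 0 := by
    intro y
    have h := LinearMap.congr_fun (Ac.pb_comp α β) (x ⊗ₜ[k] y)
    simp only [LinearMap.coe_comp, Function.comp_apply, TensorProduct.lift.tmul,
      AlgHom.toLinearMap_apply, LinearEquiv.coe_coe, TensorProduct.map_tmul,
      hx y, map_zero] at h
    simpa [Mw, hρx] using h.symm
  have f3 : ∀ (w : Ac.A α ⊗[k] Hc.H β) (c : Hc.H β) (z : Ac.A α ⊗[k] Hc.H β),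
      LinearMap.lTensor (Ac.A α) (LinearMap.mulRight k c) (Mw w z)
      = Mw w (LinearMap.lTensor (Ac.A α) (LinearMap.mulRight k c) z) := by
    intro w c z
    induction z using TensorProduct.induction_on with
    | zero => simp
    | add z1 z2 h1 h2 => simp only [map_add, h1, h2]
    | tmul a h =>
      induction w using TensorProduct.induction_on with
      | zero => simp [Mw_zero]
      | add w1 w2 h1 h2 => simp only [Mw_add, map_add, h1, h2]
      | tmul x₀ x₁ =>
        rw [Mw_tmul, LinearMap.lTensor_tmul, LinearMap.lTensor_tmul, Mw_tmul]
        simp only [LinearMap.mulRight_apply, mul_assoc]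
  have f4 : ∀ w, Mw w (b ⊗ₜ[k] (1 : Hc.H β))
      = LinearMap.rTensor (Hc.H β) ((Ac.pb α).flip b) w := by
    intro w
    induction w using TensorProduct.induction_on with
    | zero => simp [Mw_zero]
    | add w1 w2 h1 h2 => simp only [Mw_add, map_add, h1, h2]
    | tmul x₀ x₁ => simp [Mw_tmul, LinearMap.rTensor_tmul]
  have h1 : α = (α * β) * β⁻¹ := by group
  have h2 : α = α * (β * β⁻¹) := by group
  set b1 : Ac.A ((α * β) * β⁻¹) := famCast (k := k) h1 b with hb1
  set P := (Ac.ρ (α * β) β⁻¹) b1 with hP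
  set R := (Ac.ρ α (β * β⁻¹)) (famCast (k := k) h2 b) with hR
  set Q := TensorProduct.map (Ac.ρ α β).toLinearMap LinearMap.id P with hQdef
  have star : (TensorProduct.assoc k (Ac.A α) (Hc.H β) (Hc.H β⁻¹)).toLinearMap Q
      = TensorProduct.map LinearMap.id (Hc.Δ β β⁻¹).toLinearMap R := by
    have h := LinearMap.congr_fun (Ac.coassoc α β β⁻¹) b1
    simp only [LinearMap.coe_comp, Function.comp_apply, AlgHom.toLinearMap_apply,
      LinearEquiv.coe_coe] at h
    rw [show famCast (k := k) (mul_assoc α β β⁻¹) b1 = famCast (k := k) h2 b from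
      famCast_famCast (k := k) h1 (mul_assoc α β β⁻¹) h2 b] at h
    exact h
  have e2 : (1 : G) = β * β⁻¹ := (mul_inv_cancel β).symm
  set R₀ := (Ac.ρ α 1) (famCast (k := k) (mul_one α).symm b) with hR0
  have hRR0 : R = TensorProduct.map LinearMap.id (famCast (k := k) e2) R₀ := by
    have hh : α * 1 = α * (β * β⁻¹) := by rw [← e2]
    have h := rho_cast (Ac := Ac) α e2 hh (famCast (k := k) (mul_one α).symm b)
    rw [show famCast (k := k) hh (famCast (k := k) (mul_one α).symm b)
        = famCast (k := k) h2 b from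
      famCast_famCast (k := k) (mul_one α).symm hh h2 b] at h
    exact h
  have hcounit : TensorProduct.map LinearMap.id (Hc.ε.toLinearMap) R₀ = b ⊗ₜ[k] (1 : k) := by
    have h := LinearMap.congr_fun (Ac.counit α) (famCast (k := k) (mul_one α).symm b)
    simp only [LinearMap.coe_comp, Function.comp_apply, AlgHom.toLinearMap_apply,
      LinearEquiv.coe_coe] at h
    rw [show famCast (k := k) (mul_one α) (famCast (k := k) (mul_one α).symm b) = b from
      famCast_famCast (k := k) (mul_one α).symm (mul_one α) rfl b] at h
    apply (TensorProduct.rid k (Ac.A α)).injective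
    rw [show (TensorProduct.rid k (Ac.A α)) (b ⊗ₜ[k] (1 : k)) = b by simp]
    exact h
  set S' : Hc.H β⁻¹ →ₗ[k] Hc.H β := famCast (k := k) (inv_inv β) ∘ₗ Hc.S β⁻¹ with hS'
  set F : Hc.H β ⊗[k] Hc.H β⁻¹ →ₗ[k] Hc.H β :=
    LinearMap.mul' k (Hc.H β) ∘ₗ TensorProduct.map LinearMap.id S' with hF
  have C1 : LinearMap.lTensor (Ac.A α) (F ∘ₗ (Hc.Δ β β⁻¹).toLinearMap) R
      = b ⊗ₜ[k] (1 : Hc.H β) := by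
    have hmap : F ∘ₗ (Hc.Δ β β⁻¹).toLinearMap
        = Algebra.linearMap k (Hc.H β) ∘ₗ Hc.ε.toLinearMap ∘ₗ
            famCast (k := k) (mul_inv_cancel β) := by
      apply LinearMap.ext
      intro z
      have := antipode' (Hc := Hc) β z
      simp only [LinearMap.coe_comp, Function.comp_apply, AlgHom.toLinearMap_apply,
        Algebra.linearMap_apply, Algebra.algebraMap_eq_smul_one]
      simpa [F, S'] using this
    rw [hmap]
    rw [LinearMap.lTensor_comp, LinearMap.lTensor_comp]
    have step1 : LinearMap.lTensor (Ac.A α) (famCast (k := k) (mul_inv_cancel β)) R = R₀ := by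
      rw [hRR0]
      rw [show TensorProduct.map LinearMap.id (famCast (k := k) e2)
          = LinearMap.lTensor (Ac.A α) (famCast (k := k) e2) from rfl,
        ← LinearMap.comp_apply, ← LinearMap.lTensor_comp]
      rw [show (famCast (k := k) (mul_inv_cancel β) ∘ₗ famCast (k := k) e2 :
          Hc.H 1 →ₗ[k] Hc.H 1) = LinearMap.id from
        LinearMap.ext fun u => famCast_famCast (k := k) e2 (mul_inv_cancel β) rfl u]
      simp
    rw [LinearMap.comp_apply, LinearMap.comp_apply, step1]
    rw [show LinearMap.lTensor (Ac.A α) Hc.ε.toLinearMap R₀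
        = TensorProduct.map LinearMap.id Hc.ε.toLinearMap R₀ from rfl, hcounit]
    simp [Algebra.linearMap_apply]
  have aux_assoc : ∀ (z : Ac.A α ⊗[k] Hc.H β) (c : Hc.H β),
      LinearMap.lTensor (Ac.A α) (LinearMap.mul' k (Hc.H β))
        ((TensorProduct.assoc k (Ac.A α) (Hc.H β) (Hc.H β)).toLinearMap (z ⊗ₜ[k] c))
      = LinearMap.lTensor (Ac.A α) (LinearMap.mulRight k c) z := by
    intro z c
    induction z using TensorProduct.induction_on with
    | zero => simp [TensorProduct.zero_tmul]
    | add z1 z2 g1 g2 => rw [TensorProduct.add_tmul, map_add, map_add, g1, g2, map_add]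
    | tmul a h => simp [LinearMap.mul'_apply]
  have C3 : ∀ v : (Ac.A α ⊗[k] Hc.H β) ⊗[k] Hc.H β⁻¹,
      Mw ρx (LinearMap.lTensor (Ac.A α) F
        ((TensorProduct.assoc k (Ac.A α) (Hc.H β) (Hc.H β⁻¹)).toLinearMap v))
      = LinearMap.lTensor (Ac.A α) (LinearMap.mul' k (Hc.H β))
          ((TensorProduct.assoc k (Ac.A α) (Hc.H β) (Hc.H β)).toLinearMap
            (TensorProduct.map (Mw ρx) S' v)) := by
    intro v
    induction v using TensorProduct.induction_on with
    | zero => simp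
    | add v1 v2 g1 g2 => simp only [map_add, g1, g2]
    | tmul zh h' =>
      induction zh using TensorProduct.induction_on with
      | zero => simp [TensorProduct.zero_tmul, Mw_zero]
      | add z1 z2 g1 g2 =>
        rw [TensorProduct.add_tmul]
        simp only [map_add, g1, g2]
      | tmul a h =>
        rw [show (TensorProduct.assoc k (Ac.A α) (Hc.H β) (Hc.H β⁻¹)).toLinearMap
            ((a ⊗ₜ[k] h) ⊗ₜ[k] h') = a ⊗ₜ[k] (h ⊗ₜ[k] h') by simp]
        rw [show LinearMap.lTensor (Ac.A α) F (a ⊗ₜ[k] (h ⊗ₜ[k] h'))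
            = a ⊗ₜ[k] (h * S' h') by simp [F, LinearMap.mul'_apply]]
        rw [show TensorProduct.map (Mw ρx) S' ((a ⊗ₜ[k] h) ⊗ₜ[k] h')
            = (Mw ρx (a ⊗ₜ[k] h)) ⊗ₜ[k] (S' h') from TensorProduct.map_tmul _ _ _ _]
        rw [aux_assoc, f3]
        congr 1
  have hQ0 : TensorProduct.map (Mw ρx) S' Q = 0 := by
    have hzero : (Mw ρx) ∘ₗ (Ac.ρ α β).toLinearMap = 0 := LinearMap.ext fun y => f1 y
    have hmapzero : TensorProduct.map ((Mw ρx) ∘ₗ (Ac.ρ α β).toLinearMap)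
        (S' ∘ₗ LinearMap.id) = 0 := by
      rw [hzero]
      apply TensorProduct.ext'
      intro a h
      simp
    rw [hQdef, ← LinearMap.comp_apply, ← TensorProduct.map_comp, hmapzero, LinearMap.zero_apply]
  calc LinearMap.rTensor (Hc.H β) ((Ac.pb α).flip b) ρx
      = Mw ρx (b ⊗ₜ[k] (1 : Hc.H β)) := (f4 _).symm
    _ = Mw ρx (LinearMap.lTensor (Ac.A α) (F ∘ₗ (Hc.Δ β β⁻¹).toLinearMap) R) := by rw [C1]
    _ = Mw ρx (LinearMap.lTensor (Ac.A α) F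
          ((TensorProduct.assoc k (Ac.A α) (Hc.H β) (Hc.H β⁻¹)).toLinearMap Q)) := by
        rw [LinearMap.lTensor_comp, LinearMap.comp_apply, star]
        rfl
    _ = LinearMap.lTensor (Ac.A α) (LinearMap.mul' k (Hc.H β))
          ((TensorProduct.assoc k (Ac.A α) (Hc.H β) (Hc.H β)).toLinearMap
            (TensorProduct.map (Mw ρx) S' Q)) := C3 Q
    _ = 0 := by rw [hQ0]; simp
/-- The Poisson center `A^A` is an `H`-subcomodule Poisson subalgebra of `A`. -/
theorem center_subcomodule_poisson_subalgebra
    (hS : ∀ α : G, Function.Bijective (Hc.S α)) :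
    (∀ α : G, (1 : Ac.A α) ∈ Ac.center α) ∧
    (∀ (α : G) (a b : Ac.A α), a ∈ Ac.center α → b ∈ Ac.center α →
      a * b ∈ Ac.center α) ∧
    (∀ (α : G) (a b : Ac.A α), a ∈ Ac.center α → b ∈ Ac.center α →
      Ac.pb α a b ∈ Ac.center α) ∧
    (∀ (α β : G) (x : Ac.A (α * β)), x ∈ Ac.center (α * β) →
      Ac.ρ α β x ∈ LinearMap.range
        (TensorProduct.map (Ac.center α).subtype (LinearMap.id : Hc.H β →ₗ[k] Hc.H β))) := by
  have pb_one : ∀ (α : G) (c : Ac.A α), Ac.pb α c 1 = 0 := by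
    intro α c
    have h := Ac.pb_leibniz α c 1 1
    rw [mul_one, mul_one, one_mul] at h
    exact left_eq_add.mp h
  refine ⟨?_, ?_, ?_, ?_⟩
  · intro α
    rw [mem_center_iff]
    intro c
    rw [Ac.pb_skew, pb_one, neg_zero]
  · intro α a b ha hb
    rw [mem_center_iff]
    intro c
    have h1 : Ac.pb α c a = 0 := by
      rw [Ac.pb_skew, mem_center_iff.mp ha c, neg_zero]
    have h2 : Ac.pb α c b = 0 := by
      rw [Ac.pb_skew, mem_center_iff.mp hb c, neg_zero]
    rw [Ac.pb_skew, Ac.pb_leibniz, h1, h2, zero_mul, mul_zero, add_zero, neg_zero]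
  · intro α a b ha hb
    rw [mem_center_iff]
    intro c
    have h := Ac.pb_jacobi α a b c
    rw [mem_center_iff.mp hb c, mem_center_iff.mp ha c] at h
    simpa using h.symm
  · intro α β x hx
    exact mem_range_map_subtype (k := k) (Ac.center α) (fun b => (Ac.pb α).flip b)
      (fun m hm => mem_center_iff.mpr fun b => hm b) _
      (fun b => crux α β x (fun y => mem_center_iff.mp hx y) b)
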